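/- For every k ∈ ℕ, the reachable set in time k satisfies R_k = e^{-iω v_0} · F^k({0}), where F^k denotes the k-fold iterate of the Hutchinson operator applied to the singleton {0} and e^{-iω v_0} · S denotes the image of the set S under multiplication by e^{-iω v_0}. -/

import Mathlib

/-- The phalanx map `f_v(x) = (e^{-iωv}/ρ)(x + 1)`. -/
noncomputable def phalanxMap (ρ ω v : ℝ) : ℂ → ℂ :=
  fun x => (Complex.exp (-((ω * v : ℝ) : ℂ) * Complex.I) / (ρ : ℂ)) * (x + 1)

/-- The Hutchinson operator `F(S) = ⋃_{v ∈ R} f_v(S)`. -/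
noncomputable def hutchinson (ρ ω : ℝ) (R : Set ℝ) (S : Set ℂ) : Set ℂ :=
  ⋃ v ∈ R, phalanxMap ρ ω v '' S

/-- The reachable set in time `k`:
`R_k = { Σ_{j=1}^{k} ρ^{-j} e^{-iω Σ_{n=0}^{j} v_n} : v_1, …, v_k ∈ R }`, with `v_0`
the fixed initial orientation (so `R_0 = {0}`). -/
noncomputable def reachSet (ρ ω v₀ : ℝ) (R : Set ℝ) (k : ℕ) : Set ℂ :=
  { x | ∃ v : ℕ → ℝ, v 0 = v₀ ∧ (∀ n, 1 ≤ n → n ≤ k → v n ∈ R) ∧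
    x = ∑ j ∈ Finset.Icc 1 k, (1 / (ρ : ℂ) ^ j) *
      Complex.exp (-((ω * ∑ n ∈ Finset.range (j + 1), v n : ℝ) : ℂ) * Complex.I) }

/-!
With `c_v = e^{-iωv}/ρ` each map is `f_v(x) = c_v (x + 1)`, so `f_{u_0} ∘ ⋯ ∘ f_{u_{k-1}}`
sends `0` to `Σ_{j<k} c_{u_0} ⋯ c_{u_j}`, and `F^k({0})` is the set of these sums.
The exponential turns the sum of angles into a product, so the `j`-th term of a reachable
point with orientations `v` is `e^{-iωv_0} c_{v_1} ⋯ c_{v_j}`: shifting `u_n = v_{n+1}`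
matches the two sets.
-/

open Finset

theorem mul_one_add_sum_prod_range {M : Type*} [CommSemiring M] (c : ℕ → M) (k : ℕ) :
    c 0 * (1 + ∑ j ∈ range k, ∏ n ∈ range (j + 1), c (n + 1)) =
      ∑ j ∈ range (k + 1), ∏ n ∈ range (j + 1), c n := by
  rw [mul_add, mul_one, mul_sum, sum_range_succ' _ k, prod_range_one, add_comm]
  simp only [prod_range_succ' c (_ + 1), mul_comm]

noncomputable def orientationRot (ω θ : ℝ) : ℂ :=
  Complex.exp (-((ω * θ : ℝ) : ℂ) * Complex.I)

theorem orientationRot_sum {ι : Type*} (ω : ℝ) (s : Finset ι) (v : ι → ℝ) :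
    orientationRot ω (∑ n ∈ s, v n) = ∏ n ∈ s, orientationRot ω (v n) := by
  simp only [orientationRot, ← Complex.exp_sum, mul_sum, Complex.ofReal_sum, ← sum_neg_distrib,
    sum_mul]

/-- The point `f_{u 0} ∘ ⋯ ∘ f_{u (k-1)} (0)`. -/
noncomputable def addressPoint (ρ ω : ℝ) (u : ℕ → ℝ) (k : ℕ) : ℂ :=
  ∑ j ∈ range k, ∏ n ∈ range (j + 1), orientationRot ω (u n) / ρ

theorem phalanxMap_addressPoint (ρ ω : ℝ) (u : ℕ → ℝ) (k : ℕ) :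
    phalanxMap ρ ω (u 0) (addressPoint ρ ω (fun n => u (n + 1)) k) =
      addressPoint ρ ω u (k + 1) := by
  unfold addressPoint
  rw [← mul_one_add_sum_prod_range, add_comm]
  rfl

theorem iterate_hutchinson_singleton_zero (ρ ω : ℝ) (R : Set ℝ) (k : ℕ) :
    (hutchinson ρ ω R)^[k] {0} =
      {x | ∃ u : ℕ → ℝ, (∀ n < k, u n ∈ R) ∧ addressPoint ρ ω u k = x} := by
  induction k with
  | zero => simp [addressPoint, eq_comm]
  | succ k ih =>
    ext x
    simp only [Function.iterate_succ_apply', ih, hutchinson, Set.mem_iUnion, Set.mem_image,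
      Set.mem_ofPred_eq]
    constructor
    · rintro ⟨w, hw, _, ⟨u, hu, rfl⟩, rfl⟩
      refine ⟨fun | 0 => w | n + 1 => u n, fun | 0, _ => hw | n + 1, hn => hu n (by omega), ?_⟩
      exact (phalanxMap_addressPoint ρ ω _ k).symm
    · rintro ⟨u, hu, rfl⟩
      refine ⟨u 0, hu 0 k.succ_pos, _, ⟨fun n => u (n + 1), fun n hn => hu (n + 1) ?_, rfl⟩,
        phalanxMap_addressPoint ρ ω u k⟩
      omega

theorem sum_Icc_reach_eq_mul_addressPoint (ρ ω : ℝ) (v : ℕ → ℝ) (k : ℕ) :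
    ∑ j ∈ Icc 1 k, (1 / (ρ : ℂ) ^ j) *
        Complex.exp (-((ω * ∑ n ∈ range (j + 1), v n : ℝ) : ℂ) * Complex.I) =
      orientationRot ω (v 0) * addressPoint ρ ω (fun n => v (n + 1)) k := by
  rw [addressPoint, mul_sum, ← Ico_add_one_right_eq_Icc, sum_Ico_eq_sum_range,
    add_tsub_cancel_right]
  refine sum_congr rfl fun j _ => ?_
  rw [add_comm 1 j, ← orientationRot, orientationRot_sum, prod_range_succ', prod_div_distrib,
    prod_const, card_range]
  ring

theorem reachSet_eq_iterate_hutchinson_general (ρ ω v₀ : ℝ)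
    (R : Set ℝ) (k : ℕ) :
    reachSet ρ ω v₀ R k =
      (fun x : ℂ => Complex.exp (-((ω * v₀ : ℝ) : ℂ) * Complex.I) * x) ''
        ((hutchinson ρ ω R)^[k] {0}) := by
  ext x
  simp only [reachSet, iterate_hutchinson_singleton_zero, sum_Icc_reach_eq_mul_addressPoint,
    Set.mem_ofPred_eq, Set.mem_image]
  constructor
  · rintro ⟨v, rfl, hv, rfl⟩
    exact ⟨_, ⟨fun n => v (n + 1), fun n hn => hv (n + 1) n.succ_pos hn, rfl⟩, rfl⟩
  · rintro ⟨_, ⟨u, hu, rfl⟩, rfl⟩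
    exact ⟨fun | 0 => v₀ | n + 1 => u n, rfl, fun | n + 1, _, hn => hu n hn, rfl⟩

/-- For every `k ∈ ℕ`, the reachable set in time `k` satisfies
`R_k = e^{-iω v₀} · F^k({0})`, where `F^k` is the `k`-fold iterate of the Hutchinson
operator applied to `{0}`. -/
theorem reachSet_eq_iterate_hutchinson (ρ ω v₀ : ℝ) (hρ : 1 < ρ)
    (R : Set ℝ) (hR : R ⊆ Set.Icc 0 1) (k : ℕ) :
    reachSet ρ ω v₀ R k =
      (fun x : ℂ => Complex.exp (-((ω * v₀ : ℝ) : ℂ) * Complex.I) * x) ''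
        ((hutchinson ρ ω R)^[k] {0}) :=
  reachSet_eq_iterate_hutchinson_general ρ ω v₀ R k
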